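/- Let x, y ∈ 𝔘 and let z₁ = x, z₂, …, z_N = y be a path (a sequence of pairwise distinct points with z_{t+1} = 𝒱_{l_t}(z_t) for some l_t ∈ {1,2,3} at each step). Then no vertex z_t on the path lies in V(ℤ)\(𝔗 ∪ 𝔘) and satisfies |π_i(z_t)| ≥ 3 for all i ∈ {1,2,3}. -/
import Mathlib


/-- The Vieta involution in coordinate `i`:
`x ↦ Function.update x i (αᵢ − xⱼxₗ − xᵢ)` where `j = i+1`, `l = i+2` (mod 3). -/
def vAct (α : Fin 3 → ℤ) (i : Fin 3) (x : Fin 3 → ℤ) : Fin 3 → ℤ :=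
  Function.update x i (α i - x (i + 1) * x (i + 2) - x i)

/-- Membership in the integral cubic surface `V(ℤ)`. -/
def onV (α : Fin 3 → ℤ) (β : ℤ) (x : Fin 3 → ℤ) : Prop :=
  x 0 ^ 2 + x 1 ^ 2 + x 2 ^ 2 + x 0 * x 1 * x 2
    - α 0 * x 0 - α 1 * x 1 - α 2 * x 2 - β = 0

/-- The height function `Δ(x) = |x₁| + |x₂| + |x₃|`. -/
def delta (x : Fin 3 → ℤ) : ℤ := |x 0| + |x 1| + |x 2|

/-- Membership in the finite exceptional set `𝔗`. -/
def inT (α : Fin 3 → ℤ) (β : ℤ) (x : Fin 3 → ℤ) : Prop :=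
  onV α β x ∧ ∃ σ : Equiv.Perm (Fin 3),
    |x (σ 0)| ≤ 1 ∨ |x (σ 1) * x (σ 2)| ≤ max (3 * |α (σ 0)|) 4

/-- Membership in the exceptional set `𝔘`. -/
def inU (α : Fin 3 → ℤ) (β : ℤ) (x : Fin 3 → ℤ) : Prop :=
  onV α β x ∧ ¬ inT α β x ∧ ∃ σ : Equiv.Perm (Fin 3),
    |x (σ 0)| = 2 ∧ delta (vAct α (σ 1) x) ≤ delta x ∧
      delta (vAct α (σ 2) x) ≤ delta x

/-- `y` lies in the `Γ`-orbit of `x`: it is obtained from `x` by a finite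
sequence of Vieta involutions. -/
def gammaRel (α : Fin 3 → ℤ) (x y : Fin 3 → ℤ) : Prop :=
  ∃ L : List (Fin 3), y = L.foldl (fun z i => vAct α i z) x

/-- `y` lies in the `Γ₀`-orbit (mapping class group orbit) of `x`: it is
obtained from `x` by an even-length sequence of Vieta involutions. -/
def gamma0Rel (α : Fin 3 → ℤ) (x y : Fin 3 → ℤ) : Prop :=
  ∃ L : List (Fin 3), L.length % 2 = 0 ∧ y = L.foldl (fun z i => vAct α i z) x

/-- `y` is a descendent of `x`: obtained by a finite sequence of Vieta
involutions along which `Δ` is non-increasing at every step. -/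
def descendent (α : Fin 3 → ℤ) (x y : Fin 3 → ℤ) : Prop :=
  ∃ L : List (Fin 3), y = L.foldl (fun z i => vAct α i z) x ∧
    ∀ t < L.length,
      delta ((L.take (t + 1)).foldl (fun z i => vAct α i z) x) ≤
        delta ((L.take t).foldl (fun z i => vAct α i z) x)

/-- Membership in `𝔗' = {𝒱ᵢ(x), 𝒱ⱼ𝒱ᵢ(x) : x ∈ 𝔗}`. -/
def inT' (α : Fin 3 → ℤ) (β : ℤ) (x : Fin 3 → ℤ) : Prop :=
  ∃ y, inT α β y ∧
    ((∃ i, x = vAct α i y) ∨ ∃ i j, x = vAct α j (vAct α i y))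

/-- Membership in `𝔘' = {𝒱ᵢ(x), 𝒱ⱼ𝒱ᵢ(x) : x ∈ 𝔘}`. -/
def inU' (α : Fin 3 → ℤ) (β : ℤ) (x : Fin 3 → ℤ) : Prop :=
  ∃ y, inU α β y ∧
    ((∃ i, x = vAct α i y) ∨ ∃ i j, x = vAct α j (vAct α i y))

lemma fin3_cases (i : Fin 3) : i = 0 ∨ i = 1 ∨ i = 2 := by omega

lemma vAct_self (α : Fin 3 → ℤ) (i : Fin 3) (x : Fin 3 → ℤ) :
    vAct α i x i = α i - x (i + 1) * x (i + 2) - x i := Function.update_self ..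

lemma vAct_ne (α : Fin 3 → ℤ) (i : Fin 3) (x : Fin 3 → ℤ) (k : Fin 3) (h : k ≠ i) :
    vAct α i x k = x k := Function.update_of_ne h ..

lemma fin3_add_one_ne (b : Fin 3) : b + 1 ≠ b := by fin_cases b <;> decide
lemma fin3_add_two_ne (b : Fin 3) : b + 2 ≠ b := by fin_cases b <;> decide

lemma vAct_vAct (α : Fin 3 → ℤ) (i : Fin 3) (x : Fin 3 → ℤ) :
    vAct α i (vAct α i x) = x := by
  funext k
  by_cases h : k = i
  · subst h
    rw [vAct_self, vAct_ne _ _ _ _ (fin3_add_one_ne k), vAct_ne _ _ _ _ (fin3_add_two_ne k),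
      vAct_self]
    ring
  · rw [vAct_ne _ _ _ _ h, vAct_ne _ _ _ _ h]

lemma onV_vAct (α : Fin 3 → ℤ) (β : ℤ) (x : Fin 3 → ℤ) (i : Fin 3) (h : onV α β x) :
    onV α β (vAct α i x) := by
  rcases fin3_cases i with rfl | rfl | rfl
  · have e0 : vAct α 0 x 0 = α 0 - x 1 * x 2 - x 0 := vAct_self ..
    have e1 : vAct α 0 x 1 = x 1 := vAct_ne _ _ _ _ (by decide)
    have e2 : vAct α 0 x 2 = x 2 := vAct_ne _ _ _ _ (by decide)
    unfold onV at h ⊢; rw [e0, e1, e2]; linear_combination h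
  · have e1 : vAct α 1 x 1 = α 1 - x 2 * x 0 - x 1 := by
      have h := vAct_self α 1 x
      rw [show ((1 : Fin 3) + 1) = 2 from rfl, show ((1 : Fin 3) + 2) = 0 from rfl] at h
      exact h
    have e0 : vAct α 1 x 0 = x 0 := vAct_ne _ _ _ _ (by decide)
    have e2 : vAct α 1 x 2 = x 2 := vAct_ne _ _ _ _ (by decide)
    unfold onV at h ⊢; rw [e0, e1, e2]; linear_combination h
  · have e2 : vAct α 2 x 2 = α 2 - x 0 * x 1 - x 2 := by
      have h := vAct_self α 2 x
      rw [show ((2 : Fin 3) + 1) = 0 from rfl, show ((2 : Fin 3) + 2) = 1 from rfl] at h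
      exact h
    have e0 : vAct α 2 x 0 = x 0 := vAct_ne _ _ _ _ (by decide)
    have e1 : vAct α 2 x 1 = x 1 := vAct_ne _ _ _ _ (by decide)
    unfold onV at h ⊢; rw [e0, e1, e2]; linear_combination h

lemma delta_eq (x : Fin 3 → ℤ) (i : Fin 3) :
    delta x = |x i| + |x (i + 1)| + |x (i + 2)| := by
  rcases fin3_cases i with rfl | rfl | rfl
  · rfl
  · show _ = |x 1| + |x 2| + |x 0|; unfold delta; ring
  · show _ = |x 2| + |x 0| + |x 1|; unfold delta; ring

lemma delta_vAct (α : Fin 3 → ℤ) (i : Fin 3) (x : Fin 3 → ℤ) :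
    delta (vAct α i x) = |α i - x (i + 1) * x (i + 2) - x i| + |x (i + 1)| + |x (i + 2)| := by
  rw [delta_eq _ i, vAct_self, vAct_ne _ _ _ _ (fin3_add_one_ne i),
    vAct_ne _ _ _ _ (fin3_add_two_ne i)]

lemma notT_facts (α : Fin 3 → ℤ) (β : ℤ) (w : Fin 3 → ℤ)
    (hV : onV α β w) (hnT : ¬ inT α β w) (i : Fin 3) :
    2 ≤ |w i| ∧ max (3 * |α i|) 4 < |w (i + 1) * w (i + 2)| := by
  have h : ¬ ∃ σ : Equiv.Perm (Fin 3),
      |w (σ 0)| ≤ 1 ∨ |w (σ 1) * w (σ 2)| ≤ max (3 * |α (σ 0)|) 4 :=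
    fun h => hnT ⟨hV, h⟩
  push_neg at h
  have h2 := h (Equiv.addLeft i)
  simp only [Equiv.coe_addLeft, add_zero] at h2
  exact ⟨by omega, h2.2⟩

lemma key (a b c A : ℤ) (hb : 3 ≤ |b|) (hc : 3 ≤ |c|)
    (hA : 3 * |A| < |b * c|) (hdesc : |A - b * c - a| ≤ |a|) :
    |b| < |a| ∧ |c| < |a| := by
  have t1 := abs_sub (A - a) (A - b * c - a)
  rw [show A - a - (A - b * c - a) = b * c by ring] at t1
  have t2 : |A - a| ≤ |A| + |a| := abs_sub A a
  have hm : |b * c| = |b| * |c| := abs_mul b c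
  have h3 : |b| * |c| ≤ 3 * |a| - 1 := by omega
  have hb0 : 0 ≤ |b| := abs_nonneg b
  have hc0 : 0 ≤ |c| := abs_nonneg c
  constructor <;> nlinarith

/-- At a large vertex not in 𝔗, at most one Vieta move is non-increasing. -/
lemma lemma1 (α : Fin 3 → ℤ) (β : ℤ) (w : Fin 3 → ℤ)
    (hV : onV α β w) (hnT : ¬ inT α β w) (hbig : ∀ i, 3 ≤ |w i|)
    (a b : Fin 3) (hab : a ≠ b)
    (hda : delta (vAct α a w) ≤ delta w) (hdb : delta (vAct α b w) ≤ delta w) :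
    False := by
  have maxfact : ∀ i : Fin 3, delta (vAct α i w) ≤ delta w →
      |w (i + 1)| < |w i| ∧ |w (i + 2)| < |w i| := by
    intro i hd
    rw [delta_vAct, delta_eq w i] at hd
    have hA := (notT_facts α β w hV hnT i).2
    have hA' : 3 * |α i| < |w (i + 1) * w (i + 2)| := lt_of_le_of_lt (le_max_left _ _) hA
    exact key (w i) (w (i + 1)) (w (i + 2)) (α i) (hbig _) (hbig _) hA' (by omega)
  have h1 := maxfact a hda
  have h2 := maxfact b hdb
  have hcase : ∀ a b : Fin 3, a ≠ b → b = a + 1 ∨ b = a + 2 := by decide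
  rcases hcase a b hab with rfl | rfl
  · rw [show a + 1 + 2 = a by omega] at h2; omega
  · rw [show a + 2 + 1 = a by omega] at h2; omega

lemma notinT_mono (α : Fin 3 → ℤ) (β : ℤ) (w w' : Fin 3 → ℤ)
    (hV : onV α β w) (hnT : ¬ inT α β w) (hmono : ∀ i, |w i| ≤ |w' i|) :
    ¬ inT α β w' := by
  rintro ⟨-, σ, h⟩
  have hpair : ∀ p q r : Fin 3, p ≠ q → p ≠ r → q ≠ r →
      (q = p + 1 ∧ r = p + 2) ∨ (q = p + 2 ∧ r = p + 1) := by decide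
  rcases h with h | h
  · have hf := (notT_facts α β w hV hnT (σ 0)).1
    have := hmono (σ 0); omega
  · have hf := (notT_facts α β w hV hnT (σ 0)).2
    have hmul : |w (σ 1) * w (σ 2)| ≤ |w' (σ 1) * w' (σ 2)| := by
      rw [abs_mul, abs_mul]
      exact mul_le_mul (hmono _) (hmono _) (abs_nonneg _) ((abs_nonneg _).trans (hmono _))
    rcases hpair (σ 0) (σ 1) (σ 2) (σ.injective.ne (by decide)) (σ.injective.ne (by decide))
        (σ.injective.ne (by decide)) with ⟨e1, e2⟩ | ⟨e1, e2⟩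
    · rw [e1, e2] at hmul h; omega
    · rw [e1, e2] at hmul h
      rw [show w (σ 0 + 2) * w (σ 0 + 1) = w (σ 0 + 1) * w (σ 0 + 2) by ring] at hmul
      omega

lemma step_facts (α : Fin 3 → ℤ) (b : Fin 3) (w w' : Fin 3 → ℤ)
    (hb : w' = vAct α b w) (hasc : delta w < delta w') (hbig : ∀ i, 3 ≤ |w i|) :
    (∀ i, |w i| ≤ |w' i|) ∧ (∀ i, 3 ≤ |w' i|) := by
  subst hb
  have h1 : ∀ k, k ≠ b → vAct α b w k = w k := fun k hk => vAct_ne _ _ _ _ hk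
  have hd1 := delta_eq (vAct α b w) b
  have hd2 := delta_eq w b
  rw [h1 _ (fin3_add_one_ne b), h1 _ (fin3_add_two_ne b)] at hd1
  have hbb : |w b| < |vAct α b w b| := by omega
  constructor <;> intro i <;> by_cases h : i = b
  · rw [h]; omega
  · rw [h1 _ h]
  · rw [h]; have := hbig b; omega
  · rw [h1 _ h]; exact hbig i

/-- Once the path strictly ascends out of a large non-exceptional vertex, it
ascends forever, so the endpoint is large. -/
lemma ascend (α : Fin 3 → ℤ) (β : ℤ) (N : ℕ) (z : ℕ → Fin 3 → ℤ)
    (hdist : ∀ s ≤ N, ∀ t ≤ N, s ≠ t → z s ≠ z t)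
    (hstep : ∀ t < N, ∃ l : Fin 3, z (t + 1) = vAct α l (z t)) :
    ∀ k t, t + 1 + k = N → onV α β (z t) → ¬ inT α β (z t) → (∀ i, 3 ≤ |z t i|) →
      delta (z t) < delta (z (t + 1)) → ∀ i, 3 ≤ |z N i| := by
  intro k
  induction k with
  | zero =>
    intro t hN hV hnT hbig hasc
    obtain ⟨b, hb⟩ := hstep t (by omega)
    have hbig' := (step_facts α b (z t) (z (t + 1)) hb hasc hbig).2
    rw [show N = t + 1 by omega]
    exact hbig'
  | succ k ih =>
    intro t hN hV hnT hbig hasc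
    obtain ⟨b, hb⟩ := hstep t (by omega)
    obtain ⟨hmono, hbig'⟩ := step_facts α b (z t) (z (t + 1)) hb hasc hbig
    have hV' : onV α β (z (t + 1)) := by rw [hb]; exact onV_vAct α β (z t) b hV
    have hnT' : ¬ inT α β (z (t + 1)) := notinT_mono α β (z t) (z (t + 1)) hV hnT hmono
    obtain ⟨c, hc⟩ := hstep (t + 1) (by omega)
    have hcb : c ≠ b := by
      rintro rfl
      have he : z (t + 1 + 1) = z t := by rw [hc, hb, vAct_vAct]
      exact hdist (t + 1 + 1) (by omega) t (by omega) (by omega) he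
    have hasc' : delta (z (t + 1)) < delta (z (t + 1 + 1)) := by
      by_contra hle
      push_neg at hle
      refine lemma1 α β (z (t + 1)) hV' hnT' hbig' b c (Ne.symm hcb) ?_ ?_
      · rw [hb, vAct_vAct, ← hb]; exact le_of_lt hasc
      · rw [← hc]; exact hle
    exact ih (t + 1) (by omega) hV' hnT' hbig' hasc'

/-- On a path between two points of `𝔘`, no vertex lies in
`V(ℤ) \ (𝔗 ∪ 𝔘)` with all coordinates of absolute value at least `3`. -/
theorem prop_3_1_claim (α : Fin 3 → ℤ) (β : ℤ) (x y : Fin 3 → ℤ)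
    (hx : inU α β x) (hy : inU α β y)
    (N : ℕ) (z : ℕ → Fin 3 → ℤ) (hz0 : z 0 = x) (hzN : z N = y)
    (hdist : ∀ s ≤ N, ∀ t ≤ N, s ≠ t → z s ≠ z t)
    (hstep : ∀ t < N, ∃ l : Fin 3, z (t + 1) = vAct α l (z t)) :
    ¬ ∃ t ≤ N, (onV α β (z t) ∧ ¬ inT α β (z t) ∧ ¬ inU α β (z t)) ∧
      ∀ i : Fin 3, 3 ≤ |z t i| := by
  rintro ⟨t, htN, ⟨hV, hnT, hnU⟩, hbig⟩
  have ht0 : t ≠ 0 := by rintro rfl; rw [hz0] at hnU; exact hnU hx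
  have htN' : t ≠ N := by rintro rfl; rw [hzN] at hnU; exact hnU hy
  obtain ⟨a, ha⟩ := hstep (t - 1) (by omega)
  rw [show t - 1 + 1 = t by omega] at ha
  have ha' : z (t - 1) = vAct α a (z t) := by rw [ha, vAct_vAct]
  obtain ⟨b, hbst⟩ := hstep t (by omega)
  have hab : a ≠ b := by
    rintro rfl
    refine hdist (t + 1) (by omega) (t - 1) (by omega) (by omega) ?_
    rw [hbst, ha']
  rcases lt_or_ge (delta (z t)) (delta (z (t + 1))) with hlt | hle
  · have hbigN := ascend α β N z hdist hstep (N - (t + 1)) t (by omega) hV hnT hbig hlt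
    obtain ⟨-, -, σ, h2, -⟩ := hy
    have hb0 := hbigN (σ 0)
    rw [hzN] at hb0; omega
  · have hlt' : delta (z t) < delta (z (t - 1)) := by
      by_contra hle2
      push_neg at hle2
      refine lemma1 α β (z t) hV hnT hbig a b hab ?_ ?_
      · rw [← ha']; exact hle2
      · rw [← hbst]; exact hle
    have hwdist : ∀ s ≤ N, ∀ t' ≤ N, s ≠ t' → z (N - s) ≠ z (N - t') := by
      intro s hs t' ht' hne
      exact hdist (N - s) (by omega) (N - t') (by omega) (by omega)
    have hwstep : ∀ s < N, ∃ l : Fin 3, z (N - (s + 1)) = vAct α l (z (N - s)) := by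
      intro s hs
      obtain ⟨l, hl⟩ := hstep (N - s - 1) (by omega)
      rw [show N - s - 1 + 1 = N - s by omega] at hl
      refine ⟨l, ?_⟩
      rw [show N - (s + 1) = N - s - 1 by omega, hl, vAct_vAct]
    have hwt : N - (N - t) = t := by omega
    have hwt1 : N - (N - t + 1) = t - 1 := by omega
    have hbigN := ascend α β N (fun s => z (N - s)) hwdist hwstep (t - 1) (N - t)
      (by omega) (by simpa [hwt] using hV) (by simpa [hwt] using hnT)
      (by simpa [hwt] using hbig) (by simpa [hwt, hwt1] using hlt')
    obtain ⟨-, -, σ, h2, -⟩ := hx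
    have hb0 := hbigN (σ 0)
    simp only [Nat.sub_self, hz0] at hb0
    omega
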